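/- Let V⁺ = (V⁺_𝐒)_𝐒 be an operator-collection in which every word 𝐒 with V⁺_𝐒 ≠ 0 satisfies S_e = S₋ = ∅ and S₊ ≠ ∅. Define the operator A⁺₀ = Σ_𝐒 (i/|S₊|)·V⁺_𝐒 and V⁺ = Σ_𝐒 V⁺_𝐒. Then (1−P)·(i[H₀, A⁺₀] + V⁺)·P = 0, where P is the codespace projector of H₀. -/

import Mathlib

open scoped BigOperators
set_option linter.unusedSectionVars false
open Matrix

noncomputable section

namespace QLDPC

open scoped Classical

/-- The four Pauli matrices 1, X, Y, Z. -/
def pauliMat : Fin 4 → Matrix (Fin 2) (Fin 2) ℂ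
  | 0 => 1
  | 1 => !![0, 1; 1, 0]
  | 2 => !![0, -Complex.I; Complex.I, 0]
  | 3 => !![1, 0; 0, -1]

variable {Λ E : Type}

/-- Operators on the Hilbert space (ℂ²)^{⊗Λ}. -/
abbrev Op (Λ : Type) [Fintype Λ] [DecidableEq Λ] := Matrix (Λ → Fin 2) (Λ → Fin 2) ℂ

/-- The operator of a Pauli string `p : Λ → Fin 4`. -/
def pauliOp [Fintype Λ] [DecidableEq Λ] (p : Λ → Fin 4) : Op Λ :=
  fun f g => ∏ x, pauliMat (p x) (f x) (g x)

/-- Qubit support of a Pauli string. -/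
def psupp [Fintype Λ] (p : Λ → Fin 4) : Finset Λ :=
  Finset.univ.filter fun x => p x ≠ 0

/-- The operator norm (largest singular value). -/
def opNorm [Fintype Λ] [DecidableEq Λ] (A : Op Λ) : ℝ :=
  ‖Matrix.toEuclideanCLM (𝕜 := ℂ) A‖

/-- Coefficient of the Pauli string `p` in the Pauli-basis expansion of `A`. -/
def pauliCoeff [Fintype Λ] [DecidableEq Λ] (A : Op Λ) (p : Λ → Fin 4) : ℂ :=
  Matrix.trace (pauliOp p * A) / ((2 : ℂ) ^ Fintype.card Λ)

/-- Qubit support of a general operator, via its Pauli expansion. -/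
def opSupp [Fintype Λ] [DecidableEq Λ] (A : Op Λ) : Set Λ :=
  {x | ∃ p : Λ → Fin 4, pauliCoeff A p ≠ 0 ∧ p x ≠ 0}

/-- The data of a family of stabilizer checks: each check is a signed Pauli string. -/
structure Checks (Λ E : Type) where
  str : E → Λ → Fin 4
  sgn : E → Bool

variable [Fintype Λ] [DecidableEq Λ] [Fintype E]

/-- The operator of check α. -/
def checkOp (K : Checks Λ E) (α : E) : Op Λ :=
  (if K.sgn α then (-1 : ℂ) else 1) • pauliOp (K.str α)

/-- G_α = (1 + C_α)/2. -/
def Gop (K : Checks Λ E) (α : E) : Op Λ := (2⁻¹ : ℂ) • (1 + checkOp K α)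

/-- E_α = (1 - C_α)/2. -/
def Eop (K : Checks Λ E) (α : E) : Op Λ := (2⁻¹ : ℂ) • (1 - checkOp K α)

/-- The stabilizer Hamiltonian H₀ = Σ_α E_α. -/
def H0 (K : Checks Λ E) : Op Λ := ∑ α, Eop K α

/-- The stabilizer group 𝒢 generated by the checks (as a submonoid; each check squares to 1). -/
def stab (K : Checks Λ E) : Submonoid (Op Λ) :=
  Submonoid.closure (Set.range (checkOp K))

/-- All checks pairwise commute (𝒢 abelian). -/
def CommChecks (K : Checks Λ E) : Prop := ∀ α β, Commute (checkOp K α) (checkOp K β)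

/-- Check support of a qubit. -/
def suppC (K : Checks Λ E) (x : Λ) : Finset E :=
  Finset.univ.filter fun α => x ∈ psupp (K.str α)

/-- The qubit interaction graph. -/
def qubitGraph (K : Checks Λ E) : SimpleGraph Λ :=
  SimpleGraph.fromRel fun x y => ∃ α, x ∈ psupp (K.str α) ∧ y ∈ psupp (K.str α)

/-- The check interaction graph. -/
def checkGraph (K : Checks Λ E) : SimpleGraph E :=
  SimpleGraph.fromRel fun α β => (psupp (K.str α) ∩ psupp (K.str β)).Nonempty

/-- `y` lies in the (closed) ball of radius `r` around `x` in the graph `G`. -/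
def inBall {V : Type} (G : SimpleGraph V) (x y : V) (r : ℝ) : Prop :=
  G.Reachable x y ∧ (G.dist x y : ℝ) ≤ r

/-- Ball in the qubit graph. -/
def ballQ (K : Checks Λ E) (x : Λ) (r : ℝ) : Finset Λ :=
  Finset.univ.filter fun y => inBall (qubitGraph K) x y r

/-- Ball in the check graph. -/
def ballC (K : Checks Λ E) (α : E) (r : ℝ) : Finset E :=
  Finset.univ.filter fun β => inBall (checkGraph K) α β r

/-- Ball of radius `r` around a set of checks. -/
def ballCS (K : Checks Λ E) (S : Finset E) (r : ℝ) : Finset E :=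
  Finset.univ.filter fun β => ∃ α ∈ S, inBall (checkGraph K) α β r

/-- Growth of balls condition: |B_r| ≤ e^{κ r} on both graphs. -/
def BallGrowth (K : Checks Λ E) (κ : ℝ) : Prop :=
  (∀ (x : Λ) (r : ℝ), ((ballQ K x r).card : ℝ) ≤ Real.exp (κ * r)) ∧
  (∀ (α : E) (r : ℝ), ((ballC K α r).card : ℝ) ≤ Real.exp (κ * r))

/-- A finite set is connected in a graph if the induced subgraph is connected. -/
def ConnIn {V : Type} (G : SimpleGraph V) (S : Finset V) : Prop :=
  (G.induce (S : Set V)).Connected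

/-- Qubit support of a set of checks. -/
def suppSet (K : Checks Λ E) (S : Finset E) : Set Λ :=
  ↑(S.biUnion fun α => psupp (K.str α))

variable [LinearOrder E]

/-- Ordered product of operators over a finite set of check labels. -/
def ordProd (S : Finset E) (f : E → Op Λ) : Op Λ :=
  ((S.sort (· ≤ ·)).map f).prod

/-- The codespace projector P = ∏_α G_α (for commuting checks). -/
def Pmat (K : Checks Λ E) : Op Λ := ordProd Finset.univ (Gop K)

/-- The code distance: minimal support of a Pauli string p with P p P not proportional to P. -/
def codeDist (K : Checks Λ E) : ℕ :=
  sInf ((fun p => (psupp p).card) ''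
    {p : Λ → Fin 4 | ¬∃ cc : ℂ, Pmat K * pauliOp p * Pmat K = cc • Pmat K})

/-- TQO-I: Pauli strings of weight below the code distance commuting with 𝒢 belong to 𝒢. -/
def TQO1 (K : Checks Λ E) : Prop :=
  ∀ p : Λ → Fin 4, (psupp p).card < codeDist K →
    (∀ g ∈ stab K, Commute (pauliOp p) g) → pauliOp p ∈ stab K

/-- TQO-II: group elements locally supported on a small connected check set S are generated by
checks within distance ℓ|S| of S. -/
def TQO2 (K : Checks Λ E) (ℓ dtil : ℝ) : Prop :=
  ∀ S : Finset E, ConnIn (checkGraph K) S → (S.card : ℝ) < dtil →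
    ∀ g ∈ stab K, opSupp (g : Op Λ) ⊆ suppSet K S →
      (g : Op Λ) ∈ Submonoid.closure (checkOp K '' {α | ∃ β ∈ S, inBall (checkGraph K) β α (ℓ * S.card)})

/-! ### Words and operator-collections -/

/-- A word: a quadruple of pairwise disjoint subsets of the checks,
labelled (+, -, excited, ground). -/
structure Word (E : Type) where
  p : Finset E
  m : Finset E
  e : Finset E
  g : Finset E
  hpm : Disjoint p m
  hpe : Disjoint p e
  hpg : Disjoint p g
  hme : Disjoint m e
  hmg : Disjoint m g
  heg : Disjoint e g

/-- The underlying set of the word. -/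
def Word.S [DecidableEq E] (w : Word E) : Finset E := w.p ∪ w.m ∪ w.e ∪ w.g

instance : Fintype (Word E) := by
  classical
  exact Fintype.ofInjective (fun w : Word E => (w.p, w.m, w.e, w.g))
    (by
      rintro ⟨a1, a2, a3, a4, _, _, _, _, _, _⟩ ⟨b1, b2, b3, b4, _, _, _, _, _, _⟩ h
      simp only [Prod.mk.injEq] at h
      obtain ⟨h1, h2, h3, h4⟩ := h
      subst h1; subst h2; subst h3; subst h4; rfl)

/-- A word is a ghost if all components except the ground one are empty. -/
def IsGhost (w : Word E) : Prop := w.p = ∅ ∧ w.m = ∅ ∧ w.e = ∅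

/-- The empty word. -/
def emptyWord (E : Type) : Word E :=
  ⟨∅, ∅, ∅, ∅, by simp, by simp, by simp, by simp, by simp, by simp⟩

/-- Left projector assignment of a word. -/
def leftP (K : Checks Λ E) (w : Word E) (α : E) : Op Λ :=
  if α ∈ w.m ∪ w.g then Gop K α else Eop K α

/-- Right projector assignment of a word. -/
def rightP (K : Checks Λ E) (w : Word E) (α : E) : Op Λ :=
  if α ∈ w.p ∪ w.g then Gop K α else Eop K α

/-- The class 𝒳_𝐒 of operators compatible with the word 𝐒. -/
def memClass (K : Checks Λ E) (w : Word E) (X : Op Λ) : Prop :=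
  ∃ Y : Op Λ,
    (∀ α : E, (opSupp Y ∩ (psupp (K.str α) : Set Λ)).Nonempty → α ∈ w.S) ∧
    X = ordProd w.S (leftP K w) * Y * ordProd w.S (rightP K w)

/-- An operator-collection: a family (O_𝐒)_𝐒 with O_𝐒 ∈ 𝒳_𝐒. -/
def IsColl (K : Checks Λ E) (O : Word E → Op Λ) : Prop :=
  ∀ w, memClass K w (O w)

/-- The intensive word norm ‖O‖_μ of an operator-collection. -/
def wordNorm (μ : ℝ) (O : Word E → Op Λ) : ℝ :=
  ⨆ α : E, ∑ w : Word E, (if α ∈ w.S then opNorm (O w) * Real.exp (μ * w.S.card) else 0)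

/-! ### The multiplication table of words -/

/-- Labels of a check in a word: none, ground, excited, raising, lowering. -/
inductive Lbl | N | G | E | P | M
deriving DecidableEq

/-- The multiplication table of labels; `none` encodes that the product vanishes. -/
def lblMul : Lbl → Lbl → Option Lbl
  | .N, x => some x
  | .G, .N => some .G
  | .G, .G => some .G
  | .G, .E => none
  | .G, .P => none
  | .G, .M => some .M
  | .E, .N => some .E
  | .E, .G => none
  | .E, .E => some .E
  | .E, .P => some .P
  | .E, .M => none
  | .P, .N => some .P
  | .P, .G => some .P
  | .P, .E => none
  | .P, .P => none
  | .P, .M => some .E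
  | .M, .N => some .M
  | .M, .G => none
  | .M, .E => some .M
  | .M, .P => some .G
  | .M, .M => none

/-- The label of a check in a word. -/
def Word.lbl [DecidableEq E] (w : Word E) (α : E) : Lbl :=
  if α ∈ w.p then .P else if α ∈ w.m then .M else if α ∈ w.e then .E
  else if α ∈ w.g then .G else .N

/-- The product of two words is defined (the corresponding operator product does not vanish
identically by the multiplication table). -/
def MulDef (w' w : Word E) : Prop :=
  ∀ α : E, lblMul (w'.lbl α) (w.lbl α) ≠ none

private lemma disj_aux {f : E → Option Lbl} {a b : Lbl} (hab : a ≠ b) :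
    Disjoint (Finset.univ.filter fun α => f α = some a)
      (Finset.univ.filter fun α => f α = some b) := by
  rw [Finset.disjoint_left]
  intro x hx hy
  simp only [Finset.mem_filter] at hx hy
  exact hab (Option.some.inj (hx.2.symm.trans hy.2))

/-- The product word 𝐒'𝐒 (meaningful when `MulDef w' w`). -/
def wmul (w' w : Word E) : Word E where
  p := Finset.univ.filter fun α => lblMul (w'.lbl α) (w.lbl α) = some .P
  m := Finset.univ.filter fun α => lblMul (w'.lbl α) (w.lbl α) = some .M
  e := Finset.univ.filter fun α => lblMul (w'.lbl α) (w.lbl α) = some .E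
  g := Finset.univ.filter fun α => lblMul (w'.lbl α) (w.lbl α) = some .G
  hpm := disj_aux (by decide)
  hpe := disj_aux (by decide)
  hpg := disj_aux (by decide)
  hme := disj_aux (by decide)
  hmg := disj_aux (by decide)
  heg := disj_aux (by decide)

/-- The commutator of two operator-collections. -/
def collComm (O O' : Word E → Op Λ) : Word E → Op Λ := fun w =>
  ∑ w1 : Word E, ∑ w2 : Word E,
    if MulDef w1 w2 ∧ wmul w1 w2 = w ∧ (w1.S ∩ w2.S).Nonempty
    then O w1 * O' w2 - O' w1 * O w2 else 0

/-- Iterated adjoint action ad_{B_k}⋯ad_{B_1}(B_0) of operator-collections. -/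
def chainAd (B : ℕ → Word E → Op Λ) : ℕ → Word E → Op Λ
  | 0 => B 0
  | k + 1 => collComm (B (k + 1)) (chainAd B k)

/-- exp(i ad_A)(B) for operator-collections, defined componentwise. -/
def expAd (A B : Word E → Op Λ) : Word E → Op Λ := fun w =>
  ∑' k : ℕ, ((Complex.I ^ k / (k.factorial : ℂ)) • ((fun C => collComm A C)^[k] B) w)

/-! ### Sequences of words -/

/-- The running products 𝐒'_i of a sequence of words. -/
def sprime (σ : ℕ → Word E) : ℕ → Word E
  | 0 => σ 0
  | i + 1 => wmul (σ (i + 1)) (sprime σ i)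

/-- The running products with ghost words skipped. -/
def sprimeG (σ : ℕ → Word E) : ℕ → Word E
  | 0 => σ 0
  | i + 1 => if IsGhost (σ (i + 1)) then sprimeG σ i else wmul (σ (i + 1)) (sprimeG σ i)

/-- Extend a finite sequence of words by the empty word. -/
def extend {k : ℕ} (σ : Fin (k + 1) → Word E) : ℕ → Word E :=
  fun i => if h : i < k + 1 then σ ⟨i, h⟩ else emptyWord E

/-! ### Pauli norms -/

/-- Size of a minimal connected set of qubits containing the support of `p`. -/
def mSize (K : Checks Λ E) (p : Λ → Fin 4) : ℕ :=
  sInf {n | ∃ T : Finset Λ, ConnIn (qubitGraph K) T ∧ psupp p ⊆ T ∧ T.card = n}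

/-- The intensive Pauli norm of an operator given by Pauli coefficients `c`. -/
def pauliNormC (K : Checks Λ E) (μ : ℝ) (c : (Λ → Fin 4) → ℂ) : ℝ :=
  ⨆ x : Λ, ∑ p : Λ → Fin 4, (if p x ≠ 0 then ‖c p‖ * Real.exp (μ * (mSize K p : ℝ)) else 0)

/-- The intensive Pauli norm of an operator. -/
def pauliNormOp (K : Checks Λ E) (μ : ℝ) (A : Op Λ) : ℝ :=
  pauliNormC K μ (pauliCoeff A)

/-- Diameter of the qubit graph. -/
def diam (K : Checks Λ E) : ℕ :=
  Finset.univ.sup fun pr : Λ × Λ => (qubitGraph K).dist pr.1 pr.2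

/-- The spectral projector of a Hermitian matrix onto the eigenvalues in [-δ, δ]. -/
def spectralProjLE {n : Type} [Fintype n] [DecidableEq n] {A : Matrix n n ℂ}
    (hA : A.IsHermitian) (δ : ℝ) : Matrix n n ℂ :=
  (hA.eigenvectorUnitary : Matrix n n ℂ) *
    Matrix.diagonal (fun i => if |hA.eigenvalues i| ≤ δ then (1 : ℂ) else 0) *
    star (hA.eigenvectorUnitary : Matrix n n ℂ)

/-!
For `X ∈ 𝒳_𝐒` and a check `α`, the product `E_α X P` is `X P` when `α ∈ S₊ ∪ S_e` (the left
projector of `X` at `α` is `E_α`), vanishes when `α ∈ S₋ ∪ S_g` (as `E_α G_α = 0`), and vanishes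
when `α ∉ S`, since then `E_α` commutes through `X` and `E_α P = 0`. Summing over `α`,
`H₀ V_𝐒 P = |S₊| V_𝐒 P` whenever `S_e = ∅`, so `i H₀ A₀ P = -V P`, while `A₀ H₀ P = 0`.
-/

theorem pauliMat_mul_self (a : Fin 4) : pauliMat a * pauliMat a = 1 := by
  fin_cases a <;> ext i j <;> fin_cases i <;> fin_cases j <;>
    simp [pauliMat, Matrix.mul_apply, Fin.sum_univ_two, Matrix.one_apply]

theorem sum_pauliMat_mul_pauliMat (i j k l : Fin 2) :
    ∑ a : Fin 4, pauliMat a i j * pauliMat a k l = if i = l ∧ j = k then 2 else 0 := by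
  fin_cases i <;> fin_cases j <;> fin_cases k <;> fin_cases l <;>
    simp [pauliMat, Fin.sum_univ_four, Complex.ext_iff] <;> norm_num

theorem pauliOp_mul (p q : Λ → Fin 4) :
    pauliOp p * pauliOp q = fun f g => ∏ x, (pauliMat (p x) * pauliMat (q x)) (f x) (g x) := by
  funext f g
  change ∑ h : Λ → Fin 2, (∏ x, pauliMat (p x) (f x) (h x)) * ∏ x, pauliMat (q x) (h x) (g x)
    = _
  simp_rw [← Finset.prod_mul_distrib, Matrix.mul_apply]
  rw [← Fintype.prod_sum (fun x i => pauliMat (p x) (f x) i * pauliMat (q x) i (g x))]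

theorem pauliOp_mul_self (p : Λ → Fin 4) : pauliOp p * pauliOp p = 1 := by
  rw [pauliOp_mul]
  funext f g
  simp_rw [pauliMat_mul_self]
  rw [Matrix.one_apply]
  split_ifs with h
  · subst h; simp
  · obtain ⟨x, hx⟩ : ∃ x, f x ≠ g x := Function.ne_iff.mp h
    exact Finset.prod_eq_zero (Finset.mem_univ x) (by simp [hx])

theorem sum_pauliOp_apply_mul_pauliOp_apply (u h f g : Λ → Fin 2) :
    ∑ p : Λ → Fin 4, pauliOp p u h * pauliOp p f g
      = if u = g ∧ h = f then (2 : ℂ) ^ Fintype.card Λ else 0 := by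
  unfold pauliOp
  simp_rw [← Finset.prod_mul_distrib]
  rw [← Fintype.prod_sum (fun x a => pauliMat a (u x) (h x) * pauliMat a (f x) (g x))]
  simp_rw [sum_pauliMat_mul_pauliMat]
  split_ifs with hc
  · obtain ⟨rfl, rfl⟩ := hc
    simp [Finset.card_univ]
  · obtain ⟨x, hx⟩ : ∃ x, ¬(u x = g x ∧ h x = f x) := by
      by_contra! hx
      exact hc ⟨funext fun x => (hx x).1, funext fun x => (hx x).2⟩
    exact Finset.prod_eq_zero (Finset.mem_univ x) (if_neg hx)

theorem sum_pauliCoeff_smul_pauliOp (A : Op Λ) :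
    ∑ p : Λ → Fin 4, pauliCoeff A p • pauliOp p = A := by
  funext f g
  have h2 : (2 : ℂ) ^ Fintype.card Λ ≠ 0 := pow_ne_zero _ two_ne_zero
  have completeness : ∀ u h : Λ → Fin 2,
      ∑ p : Λ → Fin 4, pauliOp p u h * A h u * pauliOp p f g
        = A h u * if u = g ∧ h = f then (2 : ℂ) ^ Fintype.card Λ else 0 := by
    intro u h
    rw [← sum_pauliOp_apply_mul_pauliOp_apply u h f g, Finset.mul_sum]
    exact Finset.sum_congr rfl fun p _ => by ring
  simp only [Matrix.sum_apply, Matrix.smul_apply, smul_eq_mul, pauliCoeff, Matrix.trace,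
    Matrix.diag, Matrix.mul_apply]
  simp_rw [div_mul_eq_mul_div, Finset.sum_mul]
  rw [← Finset.sum_div, Finset.sum_comm]
  simp_rw [fun u => Finset.sum_comm (s := (Finset.univ : Finset (Λ → Fin 4)))
    (t := (Finset.univ : Finset (Λ → Fin 2)))
    (f := fun p h => pauliOp p u h * A h u * pauliOp p f g), completeness]
  rw [Finset.sum_eq_single g (fun b _ hb => Finset.sum_eq_zero fun _ _ => by
      rw [if_neg (by tauto), mul_zero]) (by simp),
    Finset.sum_eq_single f (fun b _ hb => by rw [if_neg (by tauto), mul_zero]) (by simp),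
    if_pos ⟨rfl, rfl⟩, mul_div_assoc, div_self h2, mul_one]

theorem pauliOp_commute_of_disjoint {p q : Λ → Fin 4} (h : ∀ x, p x = 0 ∨ q x = 0) :
    Commute (pauliOp p) (pauliOp q) := by
  change _ * _ = _ * _
  rw [pauliOp_mul, pauliOp_mul]
  funext f g
  refine Finset.prod_congr rfl fun x _ => ?_
  rcases h x with h0 | h0 <;> rw [h0] <;> simp [pauliMat]

theorem pauliOp_commute_of_opSupp {q : Λ → Fin 4} {Y : Op Λ}
    (h : ∀ x ∈ opSupp Y, q x = 0) : Commute (pauliOp q) Y := by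
  rw [← sum_pauliCoeff_smul_pauliOp Y]
  refine Commute.sum_right _ _ _ fun p _ => ?_
  by_cases hc : pauliCoeff Y p = 0
  · rw [hc, zero_smul]
    exact Commute.zero_right _
  · refine (pauliOp_commute_of_disjoint fun x => ?_).smul_right _
    by_cases hq : q x = 0
    · exact Or.inl hq
    · exact Or.inr (by_contra fun hp => hq (h x ⟨p, hc, hp⟩))

section Checks

variable (K : Checks Λ E)

theorem checkOp_mul_self (α : E) : checkOp K α * checkOp K α = 1 := by
  unfold checkOp
  rw [smul_mul_smul_comm, pauliOp_mul_self]
  cases K.sgn α <;> simp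

theorem Eop_mul_Gop_self (α : E) : Eop K α * Gop K α = 0 := by
  unfold Eop Gop
  rw [smul_mul_smul_comm, sub_mul, one_mul, mul_add, mul_one, checkOp_mul_self,
    add_comm (1 : Op Λ), sub_self, smul_zero]

theorem Eop_mul_self (α : E) : Eop K α * Eop K α = Eop K α := by
  unfold Eop
  rw [smul_mul_smul_comm, sub_mul, one_mul, mul_sub, mul_one, checkOp_mul_self,
    show (1 : Op Λ) - checkOp K α - (checkOp K α - 1) = (2 : ℂ) • (1 - checkOp K α) by
      rw [two_smul]; abel, smul_smul]
  norm_num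

variable {K}

theorem commute_Eop_of_commute_checkOp {Z : Op Λ} {α : E} (h : Commute Z (checkOp K α)) :
    Commute Z (Eop K α) :=
  ((Commute.one_right Z).sub_right h).smul_right _

theorem commute_Gop_of_commute_checkOp {Z : Op Λ} {α : E} (h : Commute Z (checkOp K α)) :
    Commute Z (Gop K α) :=
  ((Commute.one_right Z).add_right h).smul_right _

theorem commute_leftP_of_commute_checkOp {Z : Op Λ} (w : Word E) {α : E}
    (h : Commute Z (checkOp K α)) : Commute Z (leftP K w α) := by
  unfold leftP
  split_ifs
  exacts [commute_Gop_of_commute_checkOp h, commute_Eop_of_commute_checkOp h]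

theorem commute_rightP_of_commute_checkOp {Z : Op Λ} (w : Word E) {α : E}
    (h : Commute Z (checkOp K α)) : Commute Z (rightP K w α) := by
  unfold rightP
  split_ifs
  exacts [commute_Gop_of_commute_checkOp h, commute_Eop_of_commute_checkOp h]

theorem ordProd_eq_mul_ordProd_erase {S : Finset E} {f : E → Op Λ}
    (hf : ∀ a b, Commute (f a) (f b)) {α : E} (hα : α ∈ S) :
    ordProd S f = f α * ordProd (S.erase α) f := by
  unfold ordProd
  have hperm : (S.sort (· ≤ ·)).Perm (α :: (S.erase α).sort (· ≤ ·)) := by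
    rw [← Multiset.coe_eq_coe, ← Multiset.cons_coe, Finset.sort_eq, Finset.sort_eq,
      Finset.erase_val]
    exact (Multiset.cons_erase (Finset.mem_val.mpr hα)).symm
  have hpair : ((S.sort (· ≤ ·)).map f).Pairwise Commute :=
    List.Pairwise.map f (fun a b _ => hf a b) (Finset.pairwise_sort S (· ≤ ·))
  rw [(hperm.map f).prod_eq' hpair, List.map_cons, List.prod_cons]

theorem commute_ordProd {Z : Op Λ} {S : Finset E} {f : E → Op Λ}
    (h : ∀ β, Commute Z (f β)) : Commute Z (ordProd S f) :=
  Commute.list_prod_right _ _ fun y hy => by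
    obtain ⟨β, _, rfl⟩ := List.mem_map.mp hy
    exact h β

theorem Eop_mul_Pmat (hcomm : CommChecks K) (α : E) : Eop K α * Pmat K = 0 := by
  have hG : ∀ a b : E, Commute (Gop K a) (Gop K b) := fun a b =>
    commute_Gop_of_commute_checkOp ((commute_Gop_of_commute_checkOp (hcomm b a)).symm)
  rw [Pmat, ordProd_eq_mul_ordProd_erase hG (Finset.mem_univ α), ← mul_assoc,
    Eop_mul_Gop_self, zero_mul]

theorem H0_mul_Pmat (hcomm : CommChecks K) : H0 K * Pmat K = 0 := by
  rw [H0, Finset.sum_mul]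
  exact Finset.sum_eq_zero fun α _ => Eop_mul_Pmat hcomm α

end Checks

section Words

variable {K : Checks Λ E} {w : Word E} {X : Op Λ}

theorem leftP_of_mem_p_or_e {α : E} (hα : α ∈ w.p ∨ α ∈ w.e) : leftP K w α = Eop K α := by
  have hm : α ∉ w.m := by
    rcases hα with h | h
    exacts [Finset.disjoint_left.mp w.hpm h, Finset.disjoint_right.mp w.hme h]
  have hg : α ∉ w.g := by
    rcases hα with h | h
    exacts [Finset.disjoint_left.mp w.hpg h, Finset.disjoint_left.mp w.heg h]
  simp [leftP, hm, hg]

theorem leftP_of_mem_m_or_g {α : E} (hα : α ∈ w.m ∨ α ∈ w.g) : leftP K w α = Gop K α := by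
  simp [leftP, hα]

theorem commute_leftP (hcomm : CommChecks K) (a b : E) :
    Commute (leftP K w a) (leftP K w b) :=
  commute_leftP_of_commute_checkOp w
    (commute_leftP_of_commute_checkOp w (hcomm b a)).symm

theorem Eop_mul_of_memClass_of_mem_p_or_e (hcomm : CommChecks K) (hX : memClass K w X)
    {α : E} (hα : α ∈ w.p ∨ α ∈ w.e) : Eop K α * X = X := by
  obtain ⟨Y, -, rfl⟩ := hX
  have hS : α ∈ w.S := by rcases hα with h | h <;> simp [Word.S, h]
  rw [ordProd_eq_mul_ordProd_erase (commute_leftP hcomm) hS, leftP_of_mem_p_or_e hα]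
  simp only [← mul_assoc, Eop_mul_self]

theorem Eop_mul_of_memClass_of_mem_m_or_g (hcomm : CommChecks K) (hX : memClass K w X)
    {α : E} (hα : α ∈ w.m ∨ α ∈ w.g) : Eop K α * X = 0 := by
  obtain ⟨Y, -, rfl⟩ := hX
  have hS : α ∈ w.S := by rcases hα with h | h <;> simp [Word.S, h]
  rw [ordProd_eq_mul_ordProd_erase (commute_leftP hcomm) hS, leftP_of_mem_m_or_g hα]
  simp only [← mul_assoc, Eop_mul_Gop_self, zero_mul]

theorem commute_Eop_of_memClass_of_notMem (hcomm : CommChecks K) (hX : memClass K w X)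
    {α : E} (hα : α ∉ w.S) : Commute (Eop K α) X := by
  obtain ⟨Y, hY, rfl⟩ := hX
  have hαY : Commute (checkOp K α) Y := by
    refine (pauliOp_commute_of_opSupp fun x hx => ?_).smul_left _
    by_contra h0
    exact hα (hY α ⟨x, hx, by simp [psupp, h0]⟩)
  have hL : Commute (checkOp K α) (ordProd w.S (leftP K w)) :=
    commute_ordProd fun β => commute_leftP_of_commute_checkOp w (hcomm α β)
  have hR : Commute (checkOp K α) (ordProd w.S (rightP K w)) :=
    commute_ordProd fun β => commute_rightP_of_commute_checkOp w (hcomm α β)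
  exact (commute_Eop_of_commute_checkOp ((hL.mul_right hαY).mul_right hR).symm).symm

theorem H0_mul_mul_Pmat (hcomm : CommChecks K) (hX : memClass K w X) :
    H0 K * (X * Pmat K) = ((w.p ∪ w.e).card : ℂ) • (X * Pmat K) := by
  have hterm : ∀ α, Eop K α * (X * Pmat K) = if α ∈ w.p ∪ w.e then X * Pmat K else 0 := by
    intro α
    split_ifs with hpe
    · rw [← mul_assoc, Eop_mul_of_memClass_of_mem_p_or_e hcomm hX (Finset.mem_union.mp hpe)]
    by_cases hS : α ∈ w.S
    · have hmg : α ∈ w.m ∨ α ∈ w.g := by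
        simp only [Word.S, Finset.mem_union] at hS hpe
        tauto
      rw [← mul_assoc, Eop_mul_of_memClass_of_mem_m_or_g hcomm hX hmg, zero_mul]
    · rw [← mul_assoc, (commute_Eop_of_memClass_of_notMem hcomm hX hS).eq, mul_assoc,
        Eop_mul_Pmat hcomm, mul_zero]
  rw [H0, Finset.sum_mul]
  simp_rw [hterm]
  rw [Finset.sum_ite_mem, Finset.univ_inter, Finset.sum_const, Nat.cast_smul_eq_nsmul]

end Words

theorem H0_mul_generator_mul_Pmat {K : Checks Λ E} (hcomm : CommChecks K)
    {V : Word E → Op Λ} (hcoll : IsColl K V)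
    (hV : ∀ w : Word E, V w ≠ 0 → w.e = ∅ ∧ w.p.Nonempty) :
    H0 K * ((∑ w : Word E, (Complex.I / (w.p.card : ℂ)) • V w) * Pmat K)
      = Complex.I • ∑ w : Word E, V w * Pmat K := by
  rw [Finset.sum_mul, Finset.mul_sum, Finset.smul_sum]
  refine Finset.sum_congr rfl fun w _ => ?_
  by_cases hw : V w = 0
  · simp [hw]
  obtain ⟨he, hp⟩ := hV w hw
  have hcard : (w.p.card : ℂ) ≠ 0 := Nat.cast_ne_zero.mpr hp.card_pos.ne'
  rw [smul_mul_assoc, mul_smul_comm, H0_mul_mul_Pmat hcomm (hcoll w), he, Finset.union_empty,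
    smul_smul, div_mul_cancel₀ _ hcard]

/-- **The lowest-order generator solves its defining equation.**
Let `V⁺` be an operator-collection all of whose words satisfy `S_e = S₋ = ∅` and `S₊ ≠ ∅`,
and set `A⁺₀ = Σ_𝐒 (i/|S₊|)·V⁺_𝐒`.  Then `(1−P)·(i[H₀,A⁺₀] + V⁺)·P = 0`. -/
theorem generator_lowest_order {Λ E : Type} [Fintype Λ] [DecidableEq Λ] [Fintype E]
    [LinearOrder E] (K : Checks Λ E) (hcomm : CommChecks K)
    (V : Word E → Op Λ) (hcoll : IsColl K V)
    (hV : ∀ w : Word E, V w ≠ 0 → w.e = ∅ ∧ w.m = ∅ ∧ w.p.Nonempty) :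
    ((1 : Op Λ) - Pmat K) *
      (Complex.I •
          (H0 K * (∑ w : Word E, (Complex.I / (w.p.card : ℂ)) • V w) -
            (∑ w : Word E, (Complex.I / (w.p.card : ℂ)) • V w) * H0 K) +
        ∑ w : Word E, V w) * Pmat K = 0 := by
  have hAP := H0_mul_generator_mul_Pmat hcomm hcoll fun w hw => ⟨(hV w hw).1, (hV w hw).2.2⟩
  rw [mul_assoc, add_mul, smul_mul_assoc, sub_mul (H0 K * _), mul_assoc (H0 K), mul_assoc _ (H0 K),
    H0_mul_Pmat hcomm, mul_zero, sub_zero, hAP, smul_smul, Complex.I_mul_I, neg_one_smul,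
    Finset.sum_mul, neg_add_cancel, mul_zero]

end QLDPC
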